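/- arXiv:1802.02857 — 3 statements merged into one kernel-verified Lean document; each statement's English description precedes it below -/
import Mathlib

section
/- For f in the span of the Haar system with ‖f‖_{SL^∞} < ∞ and g in the span of the Haar system, the duality estimate |∫₀¹ f(x)g(x) dx| ≤ ‖f‖_{SL^∞} ‖g‖_{H^1} holds. -/
open MeasureTheory

/-- The dyadic interval `[(k-1)/2^n, k/2^n)`, encoded by the pair `K = (n, k)`. -/
def dyadicSet (K : ℕ × ℕ) : Set ℝ := Set.Ico ((K.2 - 1 : ℝ) / 2 ^ K.1) ((K.2 : ℝ) / 2 ^ K.1)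

/-- `(n, k)` encodes a genuine dyadic interval of `[0,1)` iff `1 ≤ k ≤ 2^n`. -/
def IsDyadic (K : ℕ × ℕ) : Prop := 1 ≤ K.2 ∧ K.2 ≤ 2 ^ K.1

/-- The `L^∞`-normalized Haar function `h_I = χ_{I^+} - χ_{I^-}` of the dyadic interval
encoded by `K = (n, k)`. -/
noncomputable def haar (K : ℕ × ℕ) : ℝ → ℝ := fun x =>
  (Set.Ico ((2 * K.2 - 2 : ℝ) / 2 ^ (K.1 + 1)) ((2 * K.2 - 1 : ℝ) / 2 ^ (K.1 + 1))).indicator 1 x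
  - (Set.Ico ((2 * K.2 - 1 : ℝ) / 2 ^ (K.1 + 1)) ((2 * K.2 : ℝ) / 2 ^ (K.1 + 1))).indicator 1 x

/-!
Haar functions of distinct dyadic intervals are orthogonal on `[0,1]`: at the same level their
supports are disjoint, and otherwise the coarser one is constant on the support of the finer one,
whose integral vanishes. Hence `∫ f g = ∫ Σ a_I b_I h_I²`, and the pointwise Cauchy–Schwarz
inequality bounds this integrand by `S(f) S(g) ≤ ‖S(f)‖_∞ S(g)`, where `S` is the square function.
-/

open Set

section

variable {α ι : Type*} [MeasurableSpace α] {μ : Measure α}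

theorem integral_sum_mul_sum_of_orthogonal (A : Finset ι) (φ : ι → α → ℝ) (a b : ι → ℝ)
    (hint : ∀ i ∈ A, ∀ j ∈ A, Integrable (fun x => φ i x * φ j x) μ)
    (horth : ∀ i ∈ A, ∀ j ∈ A, i ≠ j → ∫ x, φ i x * φ j x ∂μ = 0) :
    ∫ x, (∑ i ∈ A, a i * φ i x) * (∑ i ∈ A, b i * φ i x) ∂μ
      = ∫ x, ∑ i ∈ A, a i * b i * φ i x ^ 2 ∂μ := by
  have hexpand : ∀ x, (∑ i ∈ A, a i * φ i x) * (∑ i ∈ A, b i * φ i x)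
      = ∑ i ∈ A, ∑ j ∈ A, a i * b j * (φ i x * φ j x) := fun x => by
    rw [Finset.sum_mul_sum]
    exact Finset.sum_congr rfl fun i _ => Finset.sum_congr rfl fun j _ => by ring
  have hint' : ∀ i ∈ A, ∀ j ∈ A, Integrable (fun x => a i * b j * (φ i x * φ j x)) μ :=
    fun i hi j hj => (hint i hi j hj).const_mul _
  simp_rw [hexpand, sq]
  rw [integral_finsetSum _ fun i hi => integrable_finsetSum _ fun j hj => hint' i hi j hj,
    integral_finsetSum _ fun i hi => by simpa only [mul_assoc] using hint' i hi i hi]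
  refine Finset.sum_congr rfl fun i hi => ?_
  rw [integral_finsetSum _ (hint' i hi), Finset.sum_eq_single_of_mem i hi fun j hj hji => by
    rw [integral_const_mul, horth i hi j hj hji.symm, mul_zero]]

theorem abs_integral_le_mul_integral_of_abs_le_mul {D F G : α → ℝ} {M : ℝ}
    (hG : Integrable G μ) (hG₀ : ∀ x, 0 ≤ G x) (hFM : ∀ᵐ x ∂μ, F x ≤ M)
    (hD : ∀ x, |D x| ≤ F x * G x) : |∫ x, D x ∂μ| ≤ M * ∫ x, G x ∂μ :=
  calc |∫ x, D x ∂μ| ≤ ∫ x, |D x| ∂μ := abs_integral_le_integral_abs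
    _ ≤ ∫ x, M * G x ∂μ :=
      integral_mono_of_nonneg (ae_of_all _ fun _ => abs_nonneg _) (hG.const_mul M)
        (hFM.mono fun x hx => (hD x).trans (mul_le_mul_of_nonneg_right hx (hG₀ x)))
    _ = M * ∫ x, G x ∂μ := integral_const_mul M G

theorem ae_le_toReal_eLpNorm_top {f : α → ℝ} (hf : AEStronglyMeasurable f μ)
    (hfin : eLpNorm f ⊤ μ ≠ ⊤) : ∀ᵐ x ∂μ, f x ≤ (eLpNorm f ⊤ μ).toReal := by
  rw [toReal_eLpNorm hf]
  filter_upwards [ae_le_lpNorm_exponent_top ⟨hf, hfin.lt_top⟩] with x hx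
  exact (le_abs_self _).trans hx

theorem abs_sum_mul_mul_sq_le_sqrt_mul_sqrt (A : Finset ι) (a b c : ι → ℝ) :
    |∑ i ∈ A, a i * b i * c i ^ 2|
      ≤ √(∑ i ∈ A, a i ^ 2 * c i ^ 2) * √(∑ i ∈ A, b i ^ 2 * c i ^ 2) :=
  calc |∑ i ∈ A, a i * b i * c i ^ 2| ≤ ∑ i ∈ A, |a i * c i| * |b i * c i| :=
        (Finset.abs_sum_le_sum_abs _ _).trans_eq
          (Finset.sum_congr rfl fun i _ => by rw [← abs_mul]; ring_nf)
    _ ≤ √(∑ i ∈ A, |a i * c i| ^ 2) * √(∑ i ∈ A, |b i * c i| ^ 2) :=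
        Real.sum_mul_le_sqrt_mul_sqrt _ _ _
    _ = √(∑ i ∈ A, a i ^ 2 * c i ^ 2) * √(∑ i ∈ A, b i ^ 2 * c i ^ 2) := by
        simp only [sq_abs, mul_pow]

end

theorem mem_Ico_div_two_pow_iff (n : ℕ) (j : ℤ) (x : ℝ) :
    x ∈ Ico ((j : ℝ) / 2 ^ n) ((j + 1) / 2 ^ n) ↔ ⌊2 ^ n * x⌋ = j := by
  rw [Int.floor_eq_iff, mem_Ico, div_le_iff₀' (by positivity), lt_div_iff₀' (by positivity)]

theorem mem_dyadicSet_iff {n k : ℕ} {x : ℝ} :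
    x ∈ dyadicSet (n, k) ↔ ⌊2 ^ n * x⌋ = (k : ℤ) - 1 := by
  rw [← mem_Ico_div_two_pow_iff]
  simp [dyadicSet]

theorem floor_two_pow_mul_eq_div {n m : ℕ} (h : n ≤ m) (x : ℝ) :
    ⌊2 ^ n * x⌋ = ⌊2 ^ m * x⌋ / 2 ^ (m - n) := by
  have : (2 : ℝ) ^ n * x = 2 ^ m * x / ((2 ^ (m - n) : ℕ) : ℝ) := by
    rw [← pow_sub_mul_pow 2 h]
    push_cast
    field_simp
  rw [this, Int.floor_div_natCast]
  push_cast
  rfl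

theorem haar_apply (n k : ℕ) (x : ℝ) :
    haar (n, k) x = (if ⌊2 ^ (n + 1) * x⌋ = 2 * k - 2 then 1 else 0)
      - (if ⌊2 ^ (n + 1) * x⌋ = 2 * k - 1 then 1 else 0) := by
  have h₁ := mem_Ico_div_two_pow_iff (n + 1) (2 * k - 2) x
  have h₂ := mem_Ico_div_two_pow_iff (n + 1) (2 * k - 1) x
  push_cast at h₁ h₂
  rw [show (2 * (k : ℝ) - 2 + 1) = 2 * k - 1 by ring] at h₁
  rw [show (2 * (k : ℝ) - 1 + 1) = 2 * k by ring] at h₂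
  simp only [haar, indicator_apply, h₁, h₂, Pi.one_apply]

@[fun_prop]
theorem measurable_haar (K : ℕ × ℕ) : Measurable (haar K) :=
  (measurable_one.indicator measurableSet_Ico).sub (measurable_one.indicator measurableSet_Ico)

theorem abs_haar_le_one (K : ℕ × ℕ) (x : ℝ) : |haar K x| ≤ 1 := by
  rw [haar_apply]
  split_ifs <;> norm_num

theorem haar_eq_zero_of_notMem {K : ℕ × ℕ} {x : ℝ} (hx : x ∉ dyadicSet K) : haar K x = 0 := by
  obtain ⟨n, k⟩ := K
  rw [mem_dyadicSet_iff, floor_two_pow_mul_eq_div (Nat.le_add_right n 1),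
    Nat.add_sub_cancel_left] at hx
  rw [haar_apply, if_neg (by omega), if_neg (by omega), sub_zero]

theorem haar_mul_haar_eq_zero {n k l : ℕ} (hkl : k ≠ l) (x : ℝ) :
    haar (n, k) x * haar (n, l) x = 0 := by
  by_cases hx : x ∈ dyadicSet (n, k)
  · have hx' : x ∉ dyadicSet (n, l) := by
      rw [mem_dyadicSet_iff] at hx ⊢
      omega
    rw [haar_eq_zero_of_notMem hx', mul_zero]
  · rw [haar_eq_zero_of_notMem hx, zero_mul]

-- `haar (n, k) x` only depends on `⌊2 ^ (n + 1) * x⌋ = ⌊2 ^ m * x⌋ / 2 ^ (m - (n + 1))`.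
theorem exists_forall_haar_eq_of_lt {n m : ℕ} (k l : ℕ) (hnm : n < m) :
    ∃ c, ∀ x ∈ dyadicSet (m, l), haar (n, k) x = c :=
  ⟨_, fun x hx => by rw [haar_apply, floor_two_pow_mul_eq_div hnm, mem_dyadicSet_iff.1 hx]⟩

theorem integral_haar (K : ℕ × ℕ) : ∫ x, haar K x = 0 := by
  have hint : ∀ p q : ℝ, Integrable ((Ico p q).indicator (1 : ℝ → ℝ)) :=
    fun p q => (integrableOn_const measure_Ico_lt_top.ne (C := (1 : ℝ))).integrable_indicator
      measurableSet_Ico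
  rw [show haar K = _ - _ from rfl, integral_sub' (hint _ _) (hint _ _),
    integral_indicator_one measurableSet_Ico, integral_indicator_one measurableSet_Ico,
    Real.volume_real_Ico, Real.volume_real_Ico]
  ring_nf

theorem dyadicSet_subset_Icc {K : ℕ × ℕ} (hK : IsDyadic K) : dyadicSet K ⊆ Icc 0 1 := by
  have hk : (1 : ℝ) ≤ K.2 := by exact_mod_cast hK.1
  have hkn : (K.2 : ℝ) ≤ 2 ^ K.1 := by exact_mod_cast hK.2
  refine Ico_subset_Icc_self.trans (Icc_subset_Icc (by positivity) ?_)
  rwa [div_le_one (by positivity)]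

theorem setIntegral_Icc_haar {K : ℕ × ℕ} (hK : IsDyadic K) : ∫ x in Icc 0 1, haar K x = 0 := by
  rw [setIntegral_eq_integral_of_forall_compl_eq_zero
    fun x hx => haar_eq_zero_of_notMem fun h => hx (dyadicSet_subset_Icc hK h), integral_haar]

theorem setIntegral_Icc_haar_mul_haar_of_lt {n m : ℕ} (k l : ℕ) (hnm : n < m)
    (hL : IsDyadic (m, l)) : ∫ x in Icc 0 1, haar (n, k) x * haar (m, l) x = 0 := by
  obtain ⟨c, hc⟩ := exists_forall_haar_eq_of_lt k l hnm
  have hconst : ∀ x, haar (n, k) x * haar (m, l) x = c * haar (m, l) x := fun x => by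
    by_cases hx : x ∈ dyadicSet (m, l)
    · rw [hc x hx]
    · rw [haar_eq_zero_of_notMem hx, mul_zero, mul_zero]
  simp_rw [hconst, integral_const_mul, setIntegral_Icc_haar hL, mul_zero]

theorem setIntegral_Icc_haar_mul_haar {K L : ℕ × ℕ} (hK : IsDyadic K) (hL : IsDyadic L)
    (hKL : K ≠ L) : ∫ x in Icc 0 1, haar K x * haar L x = 0 := by
  obtain ⟨n, k⟩ := K
  obtain ⟨m, l⟩ := L
  rcases lt_trichotomy n m with hnm | rfl | hmn
  · exact setIntegral_Icc_haar_mul_haar_of_lt k l hnm hL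
  · have hkl : k ≠ l := fun h => hKL (h ▸ rfl)
    simp_rw [haar_mul_haar_eq_zero hkl, integral_zero]
  · simp_rw [mul_comm (haar (n, k) _)]
    exact setIntegral_Icc_haar_mul_haar_of_lt l k hmn hK

theorem integrable_haar_mul_haar {μ : Measure ℝ} [IsFiniteMeasure μ] (K L : ℕ × ℕ) :
    Integrable (fun x => haar K x * haar L x) μ :=
  Integrable.of_bound (by fun_prop) 1 (ae_of_all _ fun x => by
    simpa using mul_le_one₀ (abs_haar_le_one K x) (abs_nonneg _) (abs_haar_le_one L x))

theorem integrable_sqrt_sum_sq_mul_haar_sq {μ : Measure ℝ} [IsFiniteMeasure μ]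
    (A : Finset (ℕ × ℕ)) (b : ℕ × ℕ → ℝ) :
    Integrable (fun x => √(∑ K ∈ A, b K ^ 2 * haar K x ^ 2)) μ :=
  Integrable.of_bound (by fun_prop) √(∑ K ∈ A, b K ^ 2) (ae_of_all _ fun x => by
    rw [Real.norm_of_nonneg (Real.sqrt_nonneg _)]
    gcongr with K
    exact mul_le_of_le_one_right (sq_nonneg _)
      ((sq_le_one_iff_abs_le_one _).2 (abs_haar_le_one K x)))

/-- Duality estimate: for `f = Σ_{I∈A} a_I h_I` in the span of the Haar system with finite
`SL^∞` norm and `g = Σ_{I∈A} b_I h_I` in the span of the Haar system,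
`|∫₀¹ f g| ≤ ‖f‖_{SL^∞} ‖g‖_{H^1}`, where
`‖f‖_{SL^∞} = ‖(Σ a_I² h_I²)^{1/2}‖_{L^∞}` and `‖g‖_{H^1} = ∫₀¹ (Σ b_I² h_I(x)²)^{1/2} dx`. -/
theorem SLinfty_H1_duality (A : Finset (ℕ × ℕ)) (hdy : ∀ K ∈ A, IsDyadic K)
    (a b : ℕ × ℕ → ℝ)
    (hfin : eLpNorm (fun x => Real.sqrt (∑ K ∈ A, (a K) ^ 2 * (haar K x) ^ 2)) ⊤ volume ≠ ⊤) :
    |∫ x in (0:ℝ)..1, (∑ K ∈ A, a K * haar K x) * (∑ K ∈ A, b K * haar K x)|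
      ≤ (eLpNorm (fun x => Real.sqrt (∑ K ∈ A, (a K) ^ 2 * (haar K x) ^ 2)) ⊤ volume).toReal
        * ∫ x in (0:ℝ)..1, Real.sqrt (∑ K ∈ A, (b K) ^ 2 * (haar K x) ^ 2) := by
  have hF := ae_restrict_of_ae (s := Icc (0 : ℝ) 1)
    (ae_le_toReal_eLpNorm_top (by fun_prop) hfin)
  simp only [intervalIntegral.integral_of_le zero_le_one, ← integral_Icc_eq_integral_Ioc]
  rw [integral_sum_mul_sum_of_orthogonal A haar a b
    (fun K _ L _ => integrable_haar_mul_haar K L)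
    (fun K hK L hL => setIntegral_Icc_haar_mul_haar (hdy K hK) (hdy L hL))]
  exact abs_integral_le_mul_integral_of_abs_le_mul (integrable_sqrt_sum_sq_mul_haar_sq A b)
    (fun x => Real.sqrt_nonneg _) hF fun x => abs_sum_mul_mul_sq_le_sqrt_mul_sqrt A a b (haar · x)
end

section
/- Define collections of dyadic intervals by B_{[0,1)} = D_{m₀} (all dyadic intervals of length 2^{-m₀}) and inductively B_{I^+} = {K^+ : K ∈ B_I}, B_{I^-} = {K^- : K ∈ B_I} for I ∈ D_{≤ n-1}. Then for each I ∈ D_{≤ n}, B_I consists of pairwise disjoint dyadic intervals, and B_I ∩ B_{I'} = ∅ whenever I ≠ I' in D_{≤ n}. -/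
open MeasureTheory

/-- The Gamlen–Gaudet collections: `B_{[0,1)} = D_{m₀}` (all dyadic intervals of length
`2^{-m₀}`) and, inductively, `B_{I^+} = {K^+ : K ∈ B_I}` and `B_{I^-} = {K^- : K ∈ B_I}`.
Here the dyadic interval `I = [(j-1)/2^k, j/2^k)` is encoded by `(k, j)`, its left half `I^+`
by `(k+1, 2j-1)` and its right half `I^-` by `(k+1, 2j)`; `GG m₀ k j` is the collection
`B_I` for `I = (k, j)`. -/
def GG (m₀ : ℕ) : ℕ → ℕ → Finset (ℕ × ℕ)
  | 0, _ => (Finset.Icc 1 (2 ^ m₀)).image fun l => (m₀, l)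
  | k + 1, j =>
      if j % 2 = 1 then (GG m₀ k ((j + 1) / 2)).image fun K => (K.1 + 1, 2 * K.2 - 1)
      else (GG m₀ k (j / 2)).image fun K => (K.1 + 1, 2 * K.2)

lemma GG_mem (m₀ : ℕ) : ∀ k j K, K ∈ GG m₀ k j → K.1 = m₀ + k ∧ 1 ≤ K.2 := by
  intro k
  induction k with
  | zero =>
    intro j K hK
    simp only [GG, Finset.mem_image, Finset.mem_Icc] at hK
    obtain ⟨l, hl, rfl⟩ := hK
    exact ⟨rfl, hl.1⟩
  | succ k ih =>
    intro j K hK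
    simp only [GG] at hK
    split_ifs at hK with h <;>
    · simp only [Finset.mem_image] at hK
      obtain ⟨L, hL, rfl⟩ := hK
      obtain ⟨h1, h2⟩ := ih _ _ hL
      constructor
      · simp only; omega
      · simp only; omega

lemma dyadic_disj (m l l' : ℕ) (h : l ≠ l') :
    Disjoint (dyadicSet (m, l)) (dyadicSet (m, l')) := by
  unfold dyadicSet
  rw [Set.Ico_disjoint_Ico]
  simp only
  rcases h.lt_or_gt with h | h
  · have h1 : (l : ℝ) ≤ (l' : ℝ) - 1 := by
      have : (l : ℝ) + 1 ≤ l' := by exact_mod_cast h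
      linarith
    have h2 : (l : ℝ) / 2 ^ m ≤ ((l' : ℝ) - 1) / 2 ^ m := by gcongr
    exact le_trans (min_le_left _ _) (le_trans h2 (le_max_right _ _))
  · have h1 : (l' : ℝ) ≤ (l : ℝ) - 1 := by
      have : (l' : ℝ) + 1 ≤ l := by exact_mod_cast h
      linarith
    have h2 : (l' : ℝ) / 2 ^ m ≤ ((l : ℝ) - 1) / 2 ^ m := by gcongr
    exact le_trans (min_le_right _ _) (le_trans h2 (le_max_left _ _))

lemma GG_levelDisj (m₀ : ℕ) : ∀ k j j', 1 ≤ j → j ≤ 2 ^ k → 1 ≤ j' → j' ≤ 2 ^ k → j ≠ j' →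
    Disjoint (GG m₀ k j) (GG m₀ k j') := by
  intro k
  induction k with
  | zero =>
    intro j j' h1 h2 h3 h4 h5
    norm_num at h2 h4
    omega
  | succ k ih =>
    intro j j' h1 h2 h3 h4 h5
    have hpow : 2 ^ (k + 1) = 2 * 2 ^ k := by ring
    have hinj1 : Function.Injective (fun K : ℕ × ℕ => (K.1 + 1, 2 * K.2 - 1)) := by
      rintro ⟨a, b⟩ ⟨c, d⟩ hh
      simp only [Prod.mk.injEq] at hh ⊢
      omega
    have hinj2 : Function.Injective (fun K : ℕ × ℕ => (K.1 + 1, 2 * K.2)) := by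
      rintro ⟨a, b⟩ ⟨c, d⟩ hh
      simp only [Prod.mk.injEq] at hh ⊢
      omega
    by_cases hj : j % 2 = 1 <;> by_cases hj' : j' % 2 = 1 <;>
      simp only [GG, hj, hj', if_true, if_false, if_pos, if_neg, reduceIte]
    · rw [Finset.disjoint_image hinj1]
      exact ih _ _ (by omega) (by omega) (by omega) (by omega) (by omega)
    · rw [Finset.disjoint_left]
      rintro K hK hK'
      simp only [Finset.mem_image] at hK hK'
      obtain ⟨A, hA, rfl⟩ := hK
      obtain ⟨B, hB, hBe⟩ := hK'
      have := (GG_mem m₀ _ _ _ hA).2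
      simp only [Prod.mk.injEq] at hBe
      omega
    · rw [Finset.disjoint_left]
      rintro K hK hK'
      simp only [Finset.mem_image] at hK hK'
      obtain ⟨A, hA, rfl⟩ := hK
      obtain ⟨B, hB, hBe⟩ := hK'
      have := (GG_mem m₀ _ _ _ hB).2
      simp only [Prod.mk.injEq] at hBe
      omega
    · rw [Finset.disjoint_image hinj2]
      exact ih _ _ (by omega) (by omega) (by omega) (by omega) (by omega)

/-- For each `I ∈ D_{≤ n}`, the Gamlen–Gaudet collection `B_I` consists of pairwise disjoint
dyadic intervals, and `B_I ∩ B_{I'} = ∅` whenever `I ≠ I'` in `D_{≤ n}`. -/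
theorem GG_disjointness (m₀ n : ℕ) :
    (∀ k ≤ n, ∀ j, 1 ≤ j → j ≤ 2 ^ k →
      ((GG m₀ k j : Set (ℕ × ℕ)).Pairwise fun K K' =>
        Disjoint (dyadicSet K) (dyadicSet K'))) ∧
    (∀ k ≤ n, ∀ k' ≤ n, ∀ j j', 1 ≤ j → j ≤ 2 ^ k → 1 ≤ j' → j' ≤ 2 ^ k' →
      (k, j) ≠ (k', j') → Disjoint (GG m₀ k j) (GG m₀ k' j')) := by

  constructor
  · intro k _ j _ _ K hK K' hK' hne
    simp only [Finset.coe_mem, Finset.mem_coe] at hK hK'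
    obtain ⟨hK1, _⟩ := GG_mem m₀ k j K hK
    obtain ⟨hK'1, _⟩ := GG_mem m₀ k j K' hK'
    have hsnd : K.2 ≠ K'.2 := by
      intro h
      exact hne (Prod.ext (hK1.trans hK'1.symm) h)
    have hfst : K'.1 = K.1 := hK'1.trans hK1.symm
    have := dyadic_disj K.1 K.2 K'.2 hsnd
    rwa [Prod.mk.eta, ← hfst, Prod.mk.eta] at this
  · intro k _ k' _ j j' h1 h2 h3 h4 hne
    by_cases hk : k = k'
    · subst hk
      exact GG_levelDisj m₀ k j j' h1 h2 h3 h4 (fun h => hne (by rw [h]))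
    · rw [Finset.disjoint_left]
      intro K hK hK'
      have e1 := (GG_mem m₀ k j K hK).1
      have e2 := (GG_mem m₀ k' j' K hK').1
      omega
end

section
/- The Gamlen–Gaudet collections B_I (defined by B_{[0,1)} = D_{m₀}, B_{I^±} = {K^± : K ∈ B_I}) satisfy Jones' compatibility condition with constant κ = 1; in particular, for all dyadic I₀ ⊂ I in D_{≤ n} and every K ∈ B_I, one has |K ∩ B_{I₀}|/|K| = |B_{I₀}|/|B_I|, where B_J = ⋃ B_J. -/
/-!
Unwinding the recursion, the collection `B_I` of `I = [(j-1)/2^k, j/2^k)` consists of the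
`2^m₀` rescaled copies `(l + I)/2^m₀`, `l < 2^m₀`, of `I`, one inside each interval of `D_m₀`.
So `|B_I| = |I|`, and for `K ∈ B_I` and `I₀ ⊆ I` the set `K ∩ B_{I₀}` is the copy of `I₀` lying
in the same interval of `D_m₀` as `K`; both sides of the identity are therefore `|I₀|/|I|`.
-/

open MeasureTheory

/-- `B_I := ⋃ B_I`, the union of the intervals in the Gamlen–Gaudet collection of
`I = (k, j)`. -/
def UB (m₀ k j : ℕ) : Set ℝ := ⋃ K ∈ GG m₀ k j, dyadicSet K

open Set

namespace GamlenGaudet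

lemma GG_eq_image_range (m₀ : ℕ) :
    ∀ k j : ℕ, 1 ≤ j → j ≤ 2 ^ k →
      GG m₀ k j = (Finset.range (2 ^ m₀)).image fun l => (m₀ + k, 2 ^ k * l + j)
  | 0, j, hj1, hj2 => by
    obtain rfl : j = 1 := by rw [pow_zero] at hj2; omega
    ext ⟨a, b⟩
    simp only [GG, Finset.mem_image, Finset.mem_Icc, Finset.mem_range, Prod.mk.injEq]
    constructor
    · rintro ⟨l, hl, rfl, rfl⟩; exact ⟨l - 1, by omega, by simp, by omega⟩
    · rintro ⟨l, hl, rfl, rfl⟩; exact ⟨l + 1, by omega, by simp, by omega⟩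
  | k + 1, j, hj1, hj2 => by
    have hpow : 2 ^ (k + 1) = 2 * 2 ^ k := by ring
    rw [hpow] at hj2
    simp only [GG]
    split_ifs <;>
    · rw [GG_eq_image_range m₀ k _ (by omega) (by omega), Finset.image_image]
      refine Finset.image_congr fun l _ => ?_
      simp only [Function.comp_apply, Prod.mk.injEq, hpow, mul_assoc]
      exact ⟨by ring, by omega⟩

noncomputable def toBlock (m l : ℕ) (x : ℝ) : ℝ := (l + x) / 2 ^ m

lemma image_toBlock_dyadicSet (m l k j : ℕ) :
    toBlock m l '' dyadicSet (k, j) = dyadicSet (m + k, 2 ^ k * l + j) := by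
  have hm : (0 : ℝ) < (2 ^ m)⁻¹ := by positivity
  have haffine : toBlock m l = fun x : ℝ => ((2 : ℝ) ^ m)⁻¹ * x + l / 2 ^ m := by
    funext x; rw [toBlock]; ring
  rw [haffine, dyadicSet, image_affine_Ico hm, dyadicSet]
  congr 1 <;> · push_cast; field_simp; ring

lemma dyadicSet_subset_Ico_zero_one {k j : ℕ} (hj1 : 1 ≤ j) (hj2 : j ≤ 2 ^ k) :
    dyadicSet (k, j) ⊆ Ico 0 1 := by
  have hj1' : (1 : ℝ) ≤ j := by exact_mod_cast hj1
  have hj2' : (j : ℝ) ≤ 2 ^ k := by exact_mod_cast hj2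
  apply Ico_subset_Ico
  · dsimp only; apply div_nonneg <;> linarith
  · dsimp only; rwa [div_le_one (by positivity)]

lemma disjoint_image_toBlock {m l l' : ℕ} (hl : l ≠ l') {s t : Set ℝ} (hs : s ⊆ Ico 0 1)
    (ht : t ⊆ Ico 0 1) : Disjoint (toBlock m l '' s) (toBlock m l' '' t) := by
  rw [disjoint_left]
  rintro _ ⟨x, hx, rfl⟩ ⟨y, hy, hxy⟩
  have hsum : (l : ℝ) + x = l' + y := by
    rw [toBlock, toBlock] at hxy
    exact (div_left_inj' (by positivity)).mp hxy.symm
  obtain ⟨hx0, hx1⟩ := hs hx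
  obtain ⟨hy0, hy1⟩ := ht hy
  rcases hl.lt_or_gt with hlt | hlt
  · have : (l : ℝ) + 1 ≤ l' := by exact_mod_cast hlt
    linarith
  · have : (l' : ℝ) + 1 ≤ l := by exact_mod_cast hlt
    linarith

lemma UB_eq_biUnion_image_toBlock {m₀ k j : ℕ} (hj1 : 1 ≤ j) (hj2 : j ≤ 2 ^ k) :
    UB m₀ k j = ⋃ l ∈ Finset.range (2 ^ m₀), toBlock m₀ l '' dyadicSet (k, j) := by
  simp only [UB, GG_eq_image_range m₀ k j hj1 hj2, Finset.set_biUnion_finset_image,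
    image_toBlock_dyadicSet]

lemma image_toBlock_inter_biUnion {m N l : ℕ} (hl : l < N) {s t : Set ℝ} (hts : t ⊆ s)
    (hs : s ⊆ Ico 0 1) :
    toBlock m l '' s ∩ ⋃ l' ∈ Finset.range N, toBlock m l' '' t = toBlock m l '' t := by
  refine subset_antisymm ?_ fun x hx => ⟨image_mono hts hx, mem_biUnion (by simpa) hx⟩
  rintro x ⟨hxs, hxt⟩
  obtain ⟨l', -, hxl'⟩ := mem_iUnion₂.mp hxt
  obtain rfl | hne := eq_or_ne l l'
  · exact hxl'
  · exact absurd hxl' (disjoint_left.mp (disjoint_image_toBlock hne hs (hts.trans hs)) hxs)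

lemma volume_dyadicSet (K : ℕ × ℕ) : volume (dyadicSet K) = ENNReal.ofReal (2 ^ K.1)⁻¹ := by
  rw [dyadicSet, Real.volume_Ico]
  congr 1
  field_simp
  ring

lemma volume_UB {m₀ k j : ℕ} (hj1 : 1 ≤ j) (hj2 : j ≤ 2 ^ k) :
    volume (UB m₀ k j) = ENNReal.ofReal (2 ^ k)⁻¹ := by
  have hsub := dyadicSet_subset_Ico_zero_one hj1 hj2
  rw [UB_eq_biUnion_image_toBlock hj1 hj2, measure_biUnion_finset
    (fun l _ l' _ hne => disjoint_image_toBlock hne hsub hsub)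
    (fun l _ => by rw [image_toBlock_dyadicSet]; exact measurableSet_Ico)]
  simp only [image_toBlock_dyadicSet, volume_dyadicSet, Finset.sum_const, Finset.card_range,
    nsmul_eq_mul]
  rw [← ENNReal.ofReal_natCast, ← ENNReal.ofReal_mul (by positivity)]
  congr 1
  push_cast
  field_simp
  ring

end GamlenGaudet

open GamlenGaudet

theorem GG_jones_C4_general (m₀ : ℕ) (k j k₀ j₀ : ℕ)
    (hj1 : 1 ≤ j) (hj2 : j ≤ 2 ^ k)
    (hj₀1 : 1 ≤ j₀) (hj₀2 : j₀ ≤ 2 ^ k₀)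
    (hsub : dyadicSet (k₀, j₀) ⊆ dyadicSet (k, j))
    (K : ℕ × ℕ) (hK : K ∈ GG m₀ k j) :
    (volume (dyadicSet K ∩ UB m₀ k₀ j₀)).toReal / (volume (dyadicSet K)).toReal
      = (volume (UB m₀ k₀ j₀)).toReal / (volume (UB m₀ k j)).toReal := by
  obtain ⟨l, hl, rfl⟩ : ∃ l < 2 ^ m₀, (m₀ + k, 2 ^ k * l + j) = K := by
    simpa [GG_eq_image_range m₀ k j hj1 hj2] using hK
  have hinter : dyadicSet (m₀ + k, 2 ^ k * l + j) ∩ UB m₀ k₀ j₀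
      = dyadicSet (m₀ + k₀, 2 ^ k₀ * l + j₀) := by
    rw [← image_toBlock_dyadicSet, ← image_toBlock_dyadicSet,
      UB_eq_biUnion_image_toBlock hj₀1 hj₀2]
    exact image_toBlock_inter_biUnion hl hsub (dyadicSet_subset_Ico_zero_one hj1 hj2)
  rw [hinter, volume_dyadicSet, volume_dyadicSet, volume_UB hj₀1 hj₀2, volume_UB hj1 hj2]
  have hnonneg (n : ℕ) : (0 : ℝ) ≤ (2 ^ n)⁻¹ := by positivity
  simp only [ENNReal.toReal_ofReal (hnonneg _)]
  rw [pow_add, pow_add]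
  field_simp

/-- Jones' compatibility condition (C4) with constant `κ = 1` for the Gamlen–Gaudet
collections, with equality: for all dyadic intervals `I₀ ⊆ I` in `D_{≤ n}` and every
`K ∈ B_I`, one has `|K ∩ B_{I₀}|/|K| = |B_{I₀}|/|B_I|`. Here `I = (k, j)` and
`I₀ = (k₀, j₀)`. -/
theorem GG_jones_C4 (m₀ n : ℕ) (k j k₀ j₀ : ℕ)
    (hk : k ≤ n) (hj1 : 1 ≤ j) (hj2 : j ≤ 2 ^ k)
    (hk₀ : k₀ ≤ n) (hj₀1 : 1 ≤ j₀) (hj₀2 : j₀ ≤ 2 ^ k₀)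
    (hsub : dyadicSet (k₀, j₀) ⊆ dyadicSet (k, j))
    (K : ℕ × ℕ) (hK : K ∈ GG m₀ k j) :
    (volume (dyadicSet K ∩ UB m₀ k₀ j₀)).toReal / (volume (dyadicSet K)).toReal
      = (volume (UB m₀ k₀ j₀)).toReal / (volume (UB m₀ k j)).toReal :=
  GG_jones_C4_general m₀ k j k₀ j₀ hj1 hj2 hj₀1 hj₀2 hsub K hK
end
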